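/- If the human states are nonnegative and bounded by N₀ on [0,T], then the viral load V satisfies the a priori bound V(t) ≤ max(V(0), (f_1 + f_2 + f_3)N₀ / d_v) for all t ∈ [0,T], given d_v > 0 and u_4 ≥ 0. -/
import Mathlib

/-- Auxiliary: if `f 0 ≤ M` and the derivative of `f` is strictly negative whenever
`f` exceeds `M` on `[0,T]`, then `f ≤ M` on `[0,T]`. -/
lemma bound_of_deriv_neg (T M : ℝ) (f f' : ℝ → ℝ)
    (hd : ∀ t ∈ Set.Icc (0:ℝ) T, HasDerivAt f (f' t) t)
    (h0 : f 0 ≤ M)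
    (hneg : ∀ t ∈ Set.Icc (0:ℝ) T, M < f t → f' t < 0) :
    ∀ t ∈ Set.Icc (0:ℝ) T, f t ≤ M := by
  intro t₁ ht₁
  by_contra hgt
  push_neg at hgt
  obtain ⟨ht₁0, ht₁T⟩ := ht₁
  set ε : ℝ := (M + f t₁) / 2 with hε
  have hMε : M < ε := by simp only [hε]; linarith
  have hεt : ε < f t₁ := by simp only [hε]; linarith
  have hcont : ContinuousOn f (Set.Icc 0 T) := fun x hx =>
    (hd x hx).continuousAt.continuousWithinAt
  have hsub : Set.Icc (0:ℝ) t₁ ⊆ Set.Icc 0 T :=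
    Set.Icc_subset_Icc le_rfl ht₁T
  set S : Set ℝ := Set.Icc 0 t₁ ∩ f ⁻¹' Set.Iic ε with hS
  have hSne : S.Nonempty := ⟨0, ⟨le_rfl, ht₁0⟩, by simp [Set.mem_Iic]; linarith⟩
  have hSbdd : BddAbove S := ⟨t₁, fun x hx => hx.1.2⟩
  have hSclosed : IsClosed S :=
    (hcont.mono hsub).preimage_isClosed_of_isClosed isClosed_Icc isClosed_Iic
  set s := sSup S with hs
  have hsS : s ∈ S := hSclosed.csSup_mem hSne hSbdd
  have hs0 : 0 ≤ s := hsS.1.1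
  have hst₁ : s ≤ t₁ := hsS.1.2
  have hfs : f s ≤ ε := hsS.2
  have hslt : s < t₁ := lt_of_le_of_ne hst₁ (by
    intro h; rw [h] at hfs; linarith)
  -- f is strictly decreasing on [s, t₁]
  have hanti : StrictAntiOn f (Set.Icc s t₁) := by
    apply strictAntiOn_of_deriv_neg (convex_Icc s t₁)
    · exact hcont.mono (Set.Icc_subset_Icc hs0 ht₁T)
    · intro x hx
      rw [interior_Icc] at hx
      have hxT : x ∈ Set.Icc (0:ℝ) T :=
        ⟨le_of_lt (lt_of_le_of_lt hs0 hx.1), le_trans (le_of_lt hx.2) ht₁T⟩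
      have hxnotS : x ∉ S := fun hmem => not_lt.2 (le_csSup hSbdd hmem) hx.1
      have hfx : ε < f x := by
        by_contra h
        push_neg at h
        exact hxnotS ⟨⟨le_of_lt (lt_of_le_of_lt hs0 hx.1), le_of_lt hx.2⟩, h⟩
      rw [(hd x hxT).deriv]
      exact hneg x hxT (lt_trans hMε hfx)
  have := hanti (Set.left_mem_Icc.2 (le_of_lt hslt)) (Set.right_mem_Icc.2 (le_of_lt hslt)) hslt
  linarith

/-- If the human states are nonnegative and bounded by `N₀` on `[0,T]`,
then the viral load satisfies `V(t) ≤ max(V(0), (f₁+f₂+f₃)N₀/d_v)` on `[0,T]`,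
given `d_v > 0` and `u₄ ≥ 0`. -/
theorem covid_viral_load_bound
    (T f1 f2 f3 dv N0 : ℝ) (hT : 0 ≤ T)
    (hf1 : 0 ≤ f1) (hf2 : 0 ≤ f2) (hf3 : 0 ≤ f3) (hdv : 0 < dv) (hN0 : 0 ≤ N0)
    (E I1 I2 V : ℝ → ℝ) (u4 : ℝ → ℝ)
    (hu4 : ∀ t ∈ Set.Icc 0 T, 0 ≤ u4 t)
    (hV : ∀ t ∈ Set.Icc 0 T, HasDerivAt V
      (f1 * E t + f2 * I1 t + f3 * I2 t - (dv + u4 t) * V t) t)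
    (hE : ∀ t ∈ Set.Icc 0 T, E t ∈ Set.Icc 0 N0)
    (hI1 : ∀ t ∈ Set.Icc 0 T, I1 t ∈ Set.Icc 0 N0)
    (hI2 : ∀ t ∈ Set.Icc 0 T, I2 t ∈ Set.Icc 0 N0) :
    ∀ t ∈ Set.Icc 0 T, V t ≤ max (V 0) ((f1 + f2 + f3) * N0 / dv) := by
  set C : ℝ := (f1 + f2 + f3) * N0 with hC
  have hCnn : 0 ≤ C := by positivity
  set M : ℝ := max (V 0) (C / dv) with hM
  have hMC : C / dv ≤ M := le_max_right _ _
  have hMnn : 0 ≤ M := le_trans (by positivity) hMC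
  apply bound_of_deriv_neg T M V _ hV (le_max_left _ _)
  intro t ht hVt
  have hEe := hE t ht
  have hI1e := hI1 t ht
  have hI2e := hI2 t ht
  have hu4e := hu4 t ht
  have hVpos : 0 < V t := lt_of_le_of_lt hMnn hVt
  have h1 : f1 * E t + f2 * I1 t + f3 * I2 t ≤ C := by
    rw [hC]
    have := mul_le_mul_of_nonneg_left hEe.2 hf1
    have := mul_le_mul_of_nonneg_left hI1e.2 hf2
    have := mul_le_mul_of_nonneg_left hI2e.2 hf3
    nlinarith
  have h2 : dv * V t ≤ (dv + u4 t) * V t := by nlinarith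
  have h3 : C < dv * V t := by
    have : C / dv < V t := lt_of_le_of_lt hMC hVt
    calc C = dv * (C / dv) := by field_simp
    _ < dv * V t := by exact (mul_lt_mul_iff_right₀ hdv).2 this
  linarith
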